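/- (Theorem 1.) Fix ω > 0, γ > 0, β > 0 and p ∈ [0, 1/2], with p_e = 1/(e^{2ωβ} + 1) and λ = γ/(2p_e − 1). Define δ(t) = 1 − e^{λt} + 2t(p_e − p)(λ²/γ) e^{λt} and α(t) = 1 − a e^{2λt} + b e^{λt}, where a = (p_e − p)²/(p_e(1 − p_e)) and b = (p_e − p)(2p_e − 1)/(p_e(1 − p_e)). Then there exists a finite time t > 0 with δ(t)² > α(t) if and only if p < p_e. Equivalently, the transient quantum Fisher information of the Markovian qubit probe exceeds its steady-state value at some finite time if and only if the initial probe is colder than the bath thermal state (β_i > β). -/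

import Mathlib

/-!
In the dimensionless time `v = -λt > 0`, with `x = e^{-v} ∈ (0, 1)` and
`c = 2(p_e - p)/(1 - 2p_e)`, one has `δ = 1 - x + c v x` and `α = 1 - a x² + b x`.

If `p < p_e` then `c > 0`, and once `c v ≥ (3 + b²)/2` we get
`δ² ≥ 1 + (1 + b²) x > 1 + b x ≥ α`.

If `p_e ≤ p ≤ 1/2` then `-1 ≤ c ≤ 0`; since `v x ≤ 1 - x` (from `1 + v ≤ e^v`) this gives
`0 ≤ δ ≤ 1 - x`, while `α - (1 - x)² = x (2 + b - (1 + a) x) > x (1 + b - a) ≥ 0`, because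
`1 + b - a = p(1 - p)/(p_e(1 - p_e))`.
-/

open Real

namespace ColdProbe

noncomputable def delta (c v : ℝ) : ℝ := 1 - exp (-v) + c * v * exp (-v)

noncomputable def alpha (a b v : ℝ) : ℝ := 1 - a * exp (-v) ^ 2 + b * exp (-v)

lemma mul_exp_neg_le_one_sub_exp_neg (v : ℝ) : v * exp (-v) ≤ 1 - exp (-v) := by
  have h : (v + 1) * exp (-v) ≤ exp v * exp (-v) :=
    mul_le_mul_of_nonneg_right (add_one_le_exp v) (exp_pos _).le
  rw [← exp_add, add_neg_cancel, exp_zero] at h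
  linarith

lemma delta_sq_lt_alpha {a b c v : ℝ} (ha : 0 ≤ a) (hab : a ≤ 1 + b)
    (hc : c ∈ Set.Icc (-1) 0) (hv : 0 < v) : delta c v ^ 2 < alpha a b v := by
  obtain ⟨hc1, hc0⟩ := hc
  set x := exp (-v) with hx
  have hx0 : 0 < x := exp_pos _
  have hx1 : x < 1 := exp_lt_one_iff.mpr (neg_neg_of_pos hv)
  have hvx : 0 ≤ v * x := mul_nonneg hv.le hx0.le
  have hvx1 : v * x ≤ 1 - x := mul_exp_neg_le_one_sub_exp_neg v
  have hδ0 : 0 ≤ delta c v := by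
    simp only [delta, ← hx]; nlinarith
  have hδ1 : delta c v ≤ 1 - x := by
    simp only [delta, ← hx]; nlinarith
  have hgap : (1 - x) ^ 2 < alpha a b v := by
    have hpos : 0 < 2 + b - (1 + a) * x := by nlinarith
    have hdiff : alpha a b v - (1 - x) ^ 2 = x * (2 + b - (1 + a) * x) := by
      simp only [alpha, ← hx]; ring
    nlinarith [mul_pos hx0 hpos]
  exact (pow_le_pow_left₀ hδ0 hδ1 2).trans_lt hgap

lemma exists_alpha_lt_delta_sq {a b c : ℝ} (ha : 0 ≤ a) (hc : 0 < c) :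
    ∃ v > 0, alpha a b v < delta c v ^ 2 := by
  refine ⟨(3 + b ^ 2) / (2 * c), by positivity, ?_⟩
  set x := exp (-((3 + b ^ 2) / (2 * c)))
  have hx0 : 0 < x := exp_pos _
  have hδ : delta c ((3 + b ^ 2) / (2 * c)) = 1 + (1 + b ^ 2) / 2 * x := by
    simp only [delta]; field_simp; ring
  have hb : b * x < (1 + b ^ 2) * x :=
    mul_lt_mul_of_pos_right (by nlinarith [sq_nonneg (b - 1)]) hx0
  rw [hδ, alpha]
  nlinarith [mul_nonneg ha (sq_nonneg x), sq_nonneg ((1 + b ^ 2) / 2 * x)]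

lemma delta_eq {γ pe p lam : ℝ} (hpe : 2 * pe - 1 ≠ 0)
    (hlam : lam = γ / (2 * pe - 1)) (t : ℝ) :
    1 - exp (lam * t) + 2 * t * (pe - p) * (lam ^ 2 / γ) * exp (lam * t) =
      delta (2 * (pe - p) / (1 - 2 * pe)) (-(lam * t)) := by
  have hpe' : 1 - 2 * pe ≠ 0 := fun h => hpe (by linarith)
  rw [delta, neg_neg, hlam]
  field_simp
  ring

lemma alpha_eq (a b lam t : ℝ) :
    1 - a * exp (2 * lam * t) + b * exp (lam * t) = alpha a b (-(lam * t)) := by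
  rw [alpha, neg_neg, ← exp_nat_mul]
  ring_nf

lemma one_add_b_sub_a_eq {p pe a b : ℝ} (hpe : pe * (1 - pe) ≠ 0)
    (ha : a = (pe - p) ^ 2 / (pe * (1 - pe)))
    (hb : b = (pe - p) * (2 * pe - 1) / (pe * (1 - pe))) :
    1 + b - a = p * (1 - p) / (pe * (1 - pe)) := by
  rw [ha, hb, eq_div_iff hpe, sub_mul, add_mul, div_mul_cancel₀ _ hpe, div_mul_cancel₀ _ hpe]
  ring

lemma one_div_exp_add_one_lt_half {x : ℝ} (hx : 0 < x) : 1 / (exp x + 1) < 1 / 2 := by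
  gcongr
  linarith [one_lt_exp_iff.mpr hx]

end ColdProbe

open ColdProbe

/-- **Theorem 1.** For a qubit probe with initial excited-state
population `p ∈ [0,1/2]` evolving under Markovian GKSL dynamics in a bath with
thermal population `p_e = 1/(e^{2ωβ}+1)`, there exists a finite time `t > 0` at
which the transient quantum Fisher information exceeds its steady-state value —
i.e. `δ(t)² > α(t)` — if and only if the probe is initially colder than the bath
thermal state (`p < p_e`, equivalently `β_i > β`). -/
theorem cold_probe_stmt_16 (ω γ β p : ℝ) (hω : 0 < ω) (hγ : 0 < γ) (hβ : 0 < β)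
    (hp : p ∈ Set.Icc (0 : ℝ) (1 / 2))
    (pe lam a b : ℝ)
    (hpe : pe = 1 / (Real.exp (2 * ω * β) + 1))
    (hlam : lam = γ / (2 * pe - 1))
    (ha : a = (pe - p) ^ 2 / (pe * (1 - pe)))
    (hb : b = (pe - p) * (2 * pe - 1) / (pe * (1 - pe))) :
    (∃ t : ℝ, 0 < t ∧
        (1 - Real.exp (lam * t) + 2 * t * (pe - p) * (lam ^ 2 / γ) * Real.exp (lam * t)) ^ 2 >
          1 - a * Real.exp (2 * lam * t) + b * Real.exp (lam * t)) ↔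
      p < pe := by
  obtain ⟨hp0, hp2⟩ := hp
  have hpe0 : 0 < pe := hpe ▸ by positivity
  have hpe2 : pe < 1 / 2 := hpe ▸ one_div_exp_add_one_lt_half (by positivity)
  have hlam0 : lam < 0 := hlam ▸ div_neg_of_pos_of_neg hγ (by linarith)
  have hpe1 : 0 < pe * (1 - pe) := by nlinarith
  have ha0 : 0 ≤ a := ha ▸ by positivity
  simp only [delta_eq (by linarith : 2 * pe - 1 ≠ 0) hlam, alpha_eq, gt_iff_lt]
  constructor
  · rintro ⟨t, ht, hgt⟩
    by_contra! hhot
    have hab : a ≤ 1 + b := by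
      linarith [one_add_b_sub_a_eq hpe1.ne' ha hb,
        div_nonneg (mul_nonneg hp0 (by linarith : 0 ≤ 1 - p)) hpe1.le]
    have hc : 2 * (pe - p) / (1 - 2 * pe) ∈ Set.Icc (-1) 0 := by
      rw [Set.mem_Icc, le_div_iff₀ (by linarith), div_nonpos_iff]
      exact ⟨by linarith, .inr ⟨by linarith, by linarith⟩⟩
    exact (delta_sq_lt_alpha ha0 hab hc (by nlinarith)).not_gt hgt
  · intro hcold
    obtain ⟨v, hv, hgt⟩ := exists_alpha_lt_delta_sq (b := b) ha0
      (div_pos (by linarith : 0 < 2 * (pe - p)) (by linarith : (0 : ℝ) < 1 - 2 * pe))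
    refine ⟨v / -lam, div_pos hv (neg_pos.mpr hlam0), ?_⟩
    rwa [mul_div_assoc', div_neg, neg_neg, mul_div_cancel_left₀ v hlam0.ne]
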